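/- arXiv:2411.13300 — 3 statements merged into one kernel-verified Lean document; each statement's English description precedes it below -/
import Mathlib

section
/- For every p,q ∈ ℕ, P ∈ ℝ[x]_{≤p}, Q ∈ ℝ[x]_{≤q} and A ∈ GL(2,ℝ), one has Res^{p,q}(A^{*p}P, A^{*q}Q) = det(A)^{pq} · Res^{p,q}(P,Q) and Disc^{p}(A^{*p}P) = det(A)^{p(p−1)} · Disc^{p}(P). -/
noncomputable section

open Polynomial Finset

/-- The real projective line `ℝP¹`: the quotient of `ℝ² ∖ {0}` by proportionality. -/
abbrev RP1 : Type := Projectivization ℝ (Fin 2 → ℝ)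

/-- The quotient topology on the real projective line. -/
instance : TopologicalSpace RP1 :=
  inferInstanceAs (TopologicalSpace (Quotient (projectivizationSetoid ℝ (Fin 2 → ℝ))))

/-- Homogenization of a univariate real polynomial with respect to the degree `d`,
as a binary form (an element of `ℝ[x,y]`, homogeneous of degree `d` when `P.natDegree ≤ d`):
`H^d(P)(x,y) = ∑_{k=0}^d c_k x^k y^(d-k)`. -/
def homog (d : ℕ) (P : Polynomial ℝ) : MvPolynomial (Fin 2) ℝ :=
  ∑ k ∈ Finset.range (d + 1),
    MvPolynomial.C (P.coeff k) * MvPolynomial.X 0 ^ k * MvPolynomial.X 1 ^ (d - k)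

/-- The pull-back `ι_M^{*}` of a binary form `g` along the parametrized line
`ι_M : x ↦ M (x,1)ᵀ`, i.e. the univariate polynomial `g(m₁₁ x + m₁₂, m₂₁ x + m₂₂)`.
For `M = 1` this is the standard pull-back `ι^{*d} g = g(x, 1)`. -/
def pullM (M : Matrix (Fin 2) (Fin 2) ℝ) (g : MvPolynomial (Fin 2) ℝ) : Polynomial ℝ :=
  MvPolynomial.eval₂ Polynomial.C
    ![Polynomial.C (M 0 0) * Polynomial.X + Polynomial.C (M 0 1),
      Polynomial.C (M 1 0) * Polynomial.X + Polynomial.C (M 1 1)] g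

/-- Right composition `R_M g = g ∘ M` of a binary form with a linear map of `ℝ²`. -/
def compM (M : Matrix (Fin 2) (Fin 2) ℝ) (g : MvPolynomial (Fin 2) ℝ) : MvPolynomial (Fin 2) ℝ :=
  MvPolynomial.eval₂ MvPolynomial.C
    (fun i => ∑ j, MvPolynomial.C (M i j) * MvPolynomial.X j) g

/-- The operator `A^{*d} P = ι_A^{*d} (H^d P)`, i.e.
`A^{*d}P(x) = ∑_{k=0}^d c_k (a₁₁x+a₁₂)^k (a₂₁x+a₂₂)^{d-k}` for `P = ∑ c_k x^k`. -/
def AstarU (d : ℕ) (M : Matrix (Fin 2) (Fin 2) ℝ) (P : Polynomial ℝ) : Polynomial ℝ :=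
  pullM M (homog d P)

/-- The Sylvester matrix of `P` and `Q` with respect to the fixed degrees `p` and `q`
(padding with zero coefficients as if `deg P = p` and `deg Q = q`). -/
def sylvester {R : Type*} [CommRing R] (p q : ℕ) (P Q : Polynomial R) :
    Matrix (Fin (p + q)) (Fin (p + q)) R := fun i j =>
  if (i : ℕ) < q then
    (if (i : ℕ) ≤ (j : ℕ) ∧ (j : ℕ) ≤ (i : ℕ) + p then P.coeff (p + (i : ℕ) - (j : ℕ)) else 0)
  else
    (if (i : ℕ) - q ≤ (j : ℕ) ∧ (j : ℕ) ≤ (i : ℕ) then Q.coeff (q + ((i : ℕ) - q) - (j : ℕ)) else 0)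

/-- The resultant `Res^{p,q}(P,Q)` with respect to the fixed degrees `p` and `q`:
the determinant of the corresponding Sylvester matrix. -/
def resFixed {R : Type*} [CommRing R] (p q : ℕ) (P Q : Polynomial R) : R :=
  (sylvester p q P Q).det

/-- The discriminant `Disc^p(P)` of `P` with respect to the fixed degree `p`: the resultant
(with respect to degrees `(p-1, p-1)`) of the pull-backs of the two partial derivatives
`F_x`, `F_y` of the binary form `F = H^p(P)`; these pull-backs are `P'` and `p·P − x·P'`. -/
def discFixed {R : Type*} [CommRing R] (p : ℕ) (P : Polynomial R) : R :=
  (-1) ^ (p * (p - 1) / 2) *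
    resFixed (p - 1) (p - 1) (Polynomial.derivative P)
      (Polynomial.C (p : R) * P - Polynomial.X * Polynomial.derivative P)

/-- Evaluation `E_x` of a polynomial in `x₁,…,x_m;x_n` at `x ∈ ℝ^m` in its first `m`
variables, giving a univariate real polynomial in `x_n`. -/
def evalP {m : ℕ} (P : Polynomial (MvPolynomial (Fin m) ℝ)) (x : Fin m → ℝ) : Polynomial ℝ :=
  P.map (MvPolynomial.eval x : MvPolynomial (Fin m) ℝ →+* ℝ)

/-- The operator `A^{*d}` acting on the last variable of a polynomial in `x₁,…,x_m;x_n`: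
`A^{*d}P(x,x_n) = ∑_{k=0}^d c_k(x) (a₁₁x_n+a₁₂)^k (a₂₁x_n+a₂₂)^{d-k}`. -/
def AstarPoly {m : ℕ} (d : ℕ) (M : Matrix (Fin 2) (Fin 2) ℝ)
    (P : Polynomial (MvPolynomial (Fin m) ℝ)) : Polynomial (MvPolynomial (Fin m) ℝ) :=
  ∑ k ∈ Finset.range (d + 1),
    Polynomial.C (P.coeff k) *
      (Polynomial.C (MvPolynomial.C (M 0 0)) * Polynomial.X
        + Polynomial.C (MvPolynomial.C (M 0 1))) ^ k *
      (Polynomial.C (MvPolynomial.C (M 1 0)) * Polynomial.X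
        + Polynomial.C (MvPolynomial.C (M 1 1))) ^ (d - k)

/-- The order of a (polynomial) function at a point: the smallest `k` such that some
partial derivative of total order `k` does not vanish at the point, i.e. the smallest `k`
with `iteratedFDeriv ℝ k f v ≠ 0`; it is `⊤` if all derivatives vanish. -/
def ordAt {E : Type*} [NormedAddCommGroup E] [NormedSpace ℝ E] (f : E → ℝ) (v : E) : ℕ∞ :=
  sInf {k : ℕ∞ | ∃ n : ℕ, k = n ∧ iteratedFDeriv ℝ n f v ≠ 0}

/-- A function is order-invariant on a set if it has the same order at every point of the set. -/
def OrderInvariantOn {E : Type*} [NormedAddCommGroup E] [NormedSpace ℝ E]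
    (f : E → ℝ) (S : Set E) : Prop :=
  ∀ x ∈ S, ∀ y ∈ S, ordAt f x = ordAt f y

/-- `(v 0 : v 1)` is a projective root of the binary form `g` of multiplicity (exactly) `mult`:
in the factorization of `g`, the linear form vanishing on the line through `v` occurs with
exponent `mult`. -/
def HasProjRootOfMult (g : MvPolynomial (Fin 2) ℝ) (v : Fin 2 → ℝ) (mult : ℕ) : Prop :=
  ∃ h : MvPolynomial (Fin 2) ℝ,
    g = (MvPolynomial.C (v 1) * MvPolynomial.X 0 - MvPolynomial.C (v 0) * MvPolynomial.X 1) ^ mult * h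
      ∧ MvPolynomial.eval v h ≠ 0

/-- The projective zero set `Z_{ℝP¹}(P,S)` of `P` over `S`, with respect to the degree `d`
in the last variable: the set of `(x, (x_n : y))` with `x ∈ S` and `H^d(P)(x,(x_n,y)) = 0`. -/
def ZProj {m : ℕ} (d : ℕ) (P : Polynomial (MvPolynomial (Fin m) ℝ)) (S : Set (Fin m → ℝ)) :
    Set ((Fin m → ℝ) × RP1) :=
  {p | p.1 ∈ S ∧ ∃ (v : Fin 2 → ℝ) (hv : v ≠ 0),
    Projectivization.mk ℝ v hv = p.2 ∧ MvPolynomial.eval v (homog d (evalP P p.1)) = 0}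

/-- `θ` is a (finite) system of real root functions for `P` on `S`: continuous functions with
pairwise disjoint graphs whose union is `Z_ℝ(P,S)`, each of constant positive multiplicity. -/
def IsRealRootFunctions {m : ℕ} (P : Polynomial (MvPolynomial (Fin m) ℝ)) (S : Set (Fin m → ℝ))
    {k : ℕ} (θ : Fin k → (Fin m → ℝ) → ℝ) : Prop :=
  (∀ l, ContinuousOn (θ l) S) ∧
  (∀ x ∈ S, ∀ l l' : Fin k, l ≠ l' → θ l x ≠ θ l' x) ∧
  (∀ x ∈ S, ∀ t : ℝ, (evalP P x).eval t = 0 ↔ ∃ l, θ l x = t) ∧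
  (∀ l : Fin k, ∃ mult : ℕ, 0 < mult ∧ ∀ x ∈ S, (evalP P x).rootMultiplicity (θ l x) = mult)

/-- `P` is delineable on `S`. -/
def Delineable {m : ℕ} (P : Polynomial (MvPolynomial (Fin m) ℝ)) (S : Set (Fin m → ℝ)) : Prop :=
  ∃ (k : ℕ) (θ : Fin k → (Fin m → ℝ) → ℝ), IsRealRootFunctions P S θ

/-- `θ` is a (finite) system of projective root functions for `P` on `S` with respect to the
degree `d` in the last variable: continuous functions into `ℝP¹` with pairwise disjoint graphs
whose union is `Z_{ℝP¹}(P,S)`, each of constant positive multiplicity. -/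
def IsProjRootFunctions {m : ℕ} (d : ℕ) (P : Polynomial (MvPolynomial (Fin m) ℝ))
    (S : Set (Fin m → ℝ)) {k : ℕ} (θ : Fin k → (Fin m → ℝ) → RP1) : Prop :=
  (∀ l, ContinuousOn (θ l) S) ∧
  (∀ x ∈ S, ∀ l l' : Fin k, l ≠ l' → θ l x ≠ θ l' x) ∧
  (∀ x ∈ S, ∀ (v : Fin 2 → ℝ) (hv : v ≠ 0),
    (MvPolynomial.eval v (homog d (evalP P x)) = 0 ↔ ∃ l, θ l x = Projectivization.mk ℝ v hv)) ∧
  (∀ l : Fin k, ∃ mult : ℕ, 0 < mult ∧ ∀ x ∈ S, ∀ (v : Fin 2 → ℝ) (hv : v ≠ 0),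
    θ l x = Projectivization.mk ℝ v hv → HasProjRootOfMult (homog d (evalP P x)) v mult)

/-- `P` is projectively delineable on `S` (with respect to the degree `d` in the last variable). -/
def ProjDelineable {m : ℕ} (d : ℕ) (P : Polynomial (MvPolynomial (Fin m) ℝ))
    (S : Set (Fin m → ℝ)) : Prop :=
  ∃ (k : ℕ) (θ : Fin k → (Fin m → ℝ) → RP1), IsProjRootFunctions d P S θ

/-- `S` is an analytic submanifold of `ℝ^m`: around each of its points, in suitable
real-analytic coordinates, `S` is an open piece of a linear subspace. -/
def IsAnalyticSubmanifold {m : ℕ} (S : Set (Fin m → ℝ)) : Prop :=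
  ∀ s ∈ S, ∃ (U V : Set (Fin m → ℝ)) (φ ψ : (Fin m → ℝ) → (Fin m → ℝ))
      (L : Submodule ℝ (Fin m → ℝ)),
    IsOpen U ∧ IsOpen V ∧ s ∈ U ∧
    AnalyticOnNhd ℝ φ U ∧ AnalyticOnNhd ℝ ψ V ∧
    Set.MapsTo φ U V ∧ Set.MapsTo ψ V U ∧
    Set.EqOn (ψ ∘ φ) id U ∧ Set.EqOn (φ ∘ ψ) id V ∧
    φ '' (U ∩ S) = V ∩ (L : Set (Fin m → ℝ))

end

/-!
Away from the zeros of `a₂₁x + a₂₂` one has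
`A^{*d}P(x) = (a₂₁x + a₂₂)^d · P((a₁₁x + a₁₂)/(a₂₁x + a₂₂))`. Hence `A^{*}` is multiplicative,
`A^{*(a+b)}(FG) = A^{*a}F · A^{*b}G`, and `(AB)^{*} = B^{*} ∘ A^{*}`; on the space `ℝ[X]_n` of
polynomials of degree `< n` it has determinant `det(A)^{n(n-1)/2}`, as one checks on triangular
matrices. By multiplicativity the Sylvester map `(u, v) ↦ Pv + Qu`, whose determinant is the
resultant, intertwines `A^{*}` on `ℝ[X]_p × ℝ[X]_q` with `A^{*}` on `ℝ[X]_{p+q}`; comparing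
determinants leaves the factor `det(A)^{C(p+q,2) - C(p,2) - C(q,2)} = det(A)^{pq}`.
The discriminant is the resultant of `P'` and `pP - XP'`. For `A^{*p}P` these two become the
combinations of `A^{*(p-1)}P'` and `A^{*(p-1)}(pP - XP')` with coefficient matrix `A` (chain rule
and Euler's identity), which contributes one more factor `det(A)^{p-1}`.
-/

noncomputable section

open Polynomial Finset

theorem Nat.choose_two_add (m n : ℕ) : (m + n).choose 2 = m.choose 2 + n.choose 2 + m * n := by
  simp [Nat.add_choose_eq, Finset.Nat.antidiagonal_succ]
  ring

theorem prod_pow_mul_pow_rev {R : Type*} [CommMonoid R] (a b : R) (n : ℕ) :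
    ∏ j : Fin n, a ^ (j : ℕ) * b ^ (n - 1 - j) = (a * b) ^ n.choose 2 := by
  rw [prod_mul_distrib, prod_pow_eq_pow_sum, prod_pow_eq_pow_sum,
    Fin.sum_univ_eq_sum_range (fun j => j), Fin.sum_univ_eq_sum_range (fun j => n - 1 - j),
    sum_range_reflect (fun j => j), sum_range_id, ← Nat.choose_two_right, mul_pow]

theorem natCast_mul_pow_eq_mul_pow_pred {R : Type*} [CommSemiring R] (a : R) (i : ℕ) :
    (i : R) * a ^ i = i * a * a ^ (i - 1) := by
  cases i with
  | zero => simp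
  | succ i => rw [Nat.add_sub_cancel, pow_succ]; ring

theorem coeff_X_mul_derivative {R : Type*} [CommSemiring R] (P : R[X]) (k : ℕ) :
    (X * derivative P).coeff k = k * P.coeff k := by
  cases k with
  | zero => simp
  | succ k => rw [coeff_X_mul, coeff_derivative]; push_cast; ring

theorem eq_of_eval_eq_of_eval_ne_zero {R : Type*} [CommRing R] [IsDomain R] [Infinite R]
    {f g h : R[X]} (hh : h ≠ 0) (H : ∀ t, h.eval t ≠ 0 → f.eval t = g.eval t) : f = g :=
  eq_of_infinite_eval_eq _ _ ((finite_setOfPred_isRoot hh).infinite_compl.mono fun t ht => H t ht)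

theorem natDegree_le_pred_of_mem_degreeLT {R : Type*} [Semiring R] {n : ℕ} {P : R[X]}
    (hP : P ∈ R[X]_n) : P.natDegree ≤ n - 1 := by
  rcases eq_or_ne P 0 with rfl | hP0
  · simp
  · have := (natDegree_lt_iff_degree_lt hP0).mpr (mem_degreeLT.mp hP)
    omega

theorem Matrix.det_fromBlocks_smul_one {R ι : Type*} [CommRing R] [Fintype ι] [DecidableEq ι]
    (a b c d : R) :
    (Matrix.fromBlocks (a • 1) (b • 1) (c • 1) (d • 1) : Matrix (ι ⊕ ι) (ι ⊕ ι) R).det =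
      (a * d - b * c) ^ Fintype.card ι := by
  let e : ι ⊕ ι ≃ Fin 2 × ι :=
    (Equiv.boolProdEquivSum ι).symm.trans (finTwoEquiv.symm.prodCongr (Equiv.refl ι))
  have h : Matrix.fromBlocks (a • 1) (b • 1) (c • 1) (d • 1) =
      (Matrix.kroneckerMap (· * ·) !![a, b; c, d] (1 : Matrix ι ι R)).submatrix e e := by
    ext (i | i) (j | j) <;> simp [e, finTwoEquiv, Matrix.one_apply]
  rw [h, Matrix.det_submatrix_equiv_self, Matrix.det_kronecker, Matrix.det_one,
    Matrix.det_fin_two_of]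
  simp

theorem LinearMap.det_prod_smul_fst_add_smul_snd {R E ι : Type*} [CommRing R] [AddCommGroup E]
    [Module R E] [Fintype ι] [DecidableEq ι] (v : Module.Basis ι R E) (a b c d : R) :
    ((a • LinearMap.fst R E E + b • LinearMap.snd R E E).prod
        (c • LinearMap.fst R E E + d • LinearMap.snd R E E)).det =
      (a * d - b * c) ^ Fintype.card ι := by
  rw [← LinearMap.det_toMatrix (v.prod v), ← Matrix.det_fromBlocks_smul_one a b c d]
  congr 1
  ext (i | i) (j | j) <;>
    simp [LinearMap.toMatrix_apply, Matrix.one_apply, Finsupp.single_apply, eq_comm]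

theorem sylvester_eq_transpose_submatrix_rev {R : Type*} [CommRing R] (p q : ℕ) (P Q : R[X]) :
    _root_.sylvester p q P Q =
      ((Polynomial.sylvester P Q p q).submatrix Fin.revPerm Fin.revPerm).transpose := by
  ext i j
  obtain ⟨k, rfl⟩ := Fin.revPerm.surjective i
  have hj := j.isLt
  simp only [Matrix.transpose_apply, Matrix.submatrix_apply, Fin.revPerm_apply, Fin.rev_rev]
  induction k using Fin.addCases <;> simp [_root_.sylvester, Polynomial.sylvester] <;>
    split_ifs <;> first | rfl | omega | (congr 1; omega)

theorem resFixed_eq_resultant {R : Type*} [CommRing R] (p q : ℕ) (P Q : R[X]) :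
    resFixed p q P Q = resultant P Q p q := by
  rw [resFixed, resultant, sylvester_eq_transpose_submatrix_rev, Matrix.det_transpose,
    Matrix.det_submatrix_equiv_self]

theorem resultant_C_mul_add_C_mul {R : Type*} [CommRing R] {n : ℕ} {U V : R[X]}
    (hU : U.natDegree ≤ n) (hV : V.natDegree ≤ n) (α β γ δ : R) :
    resultant (C α * U + C γ * V) (C β * U + C δ * V) n n =
      (α * δ - β * γ) ^ n * resultant U V n n := by
  have hcomb : ∀ a b : R, (C a * U + C b * V).natDegree ≤ n := fun a b =>
    natDegree_add_le_of_degree_le ((natDegree_C_mul_le a U).trans hU)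
      ((natDegree_C_mul_le b V).trans hV)
  set E := R[X]_n
  have hcomp : sylvesterMap _ _ (hcomb α γ) (hcomb β δ) = sylvesterMap U V hU hV ∘ₗ
      (δ • LinearMap.fst R E E + γ • LinearMap.snd R E E).prod
        (β • LinearMap.fst R E E + α • LinearMap.snd R E E) := by
    refine LinearMap.ext fun ⟨u, v⟩ => Subtype.ext ?_
    simp [sylvesterMap_apply_coe, smul_eq_C_mul]
    ring
  have h := congrArg (fun f => (LinearMap.toMatrix
    (((degreeLT.basis R n).prod (degreeLT.basis R n)).reindex finSumFinEquiv)
    (degreeLT.basis R (n + n)) f).det) hcomp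
  simp only [LinearMap.toMatrix_comp _
      (((degreeLT.basis R n).prod (degreeLT.basis R n)).reindex finSumFinEquiv),
    Matrix.det_mul, toMatrix_sylvesterMap', LinearMap.det_toMatrix] at h
  rw [LinearMap.det_prod_smul_fst_add_smul_snd (degreeLT.basis R n), Fintype.card_fin] at h
  rw [resultant, resultant, h]
  ring

section RowLin

variable {R : Type*} [CommRing R]

def rowLin (M : Matrix (Fin 2) (Fin 2) R) (i : Fin 2) : R[X] := C (M i 0) * X + C (M i 1)

theorem natDegree_rowLin_le (M : Matrix (Fin 2) (Fin 2) R) (i : Fin 2) :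
    (rowLin M i).natDegree ≤ 1 :=
  natDegree_linear_le

@[simp]
theorem eval_rowLin (M : Matrix (Fin 2) (Fin 2) R) (i : Fin 2) (t : R) :
    (rowLin M i).eval t = M i 0 * t + M i 1 := by
  simp [rowLin]

@[simp]
theorem derivative_rowLin (M : Matrix (Fin 2) (Fin 2) R) (i : Fin 2) :
    derivative (rowLin M i) = C (M i 0) := by
  simp [rowLin]

theorem eval_rowLin_mul (A B : Matrix (Fin 2) (Fin 2) R) (i : Fin 2) (t : R) :
    (rowLin (A * B) i).eval t = A i 0 * (rowLin B 0).eval t + A i 1 * (rowLin B 1).eval t := by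
  simp only [eval_rowLin, Matrix.mul_apply, Fin.sum_univ_two]
  ring

theorem rowLin_ne_zero {M : Matrix (Fin 2) (Fin 2) R} (hM : M.det ≠ 0) (i : Fin 2) :
    rowLin M i ≠ 0 := by
  intro h
  have h0 : M i 0 = 0 := by simpa [rowLin] using congrArg (coeff · 1) h
  have h1 : M i 1 = 0 := by simpa [rowLin] using congrArg (coeff · 0) h
  fin_cases i <;> simp_all [Matrix.det_fin_two]

theorem natDegree_rowLin_pow_le (M : Matrix (Fin 2) (Fin 2) R) (i : Fin 2) (k : ℕ) :
    (rowLin M i ^ k).natDegree ≤ k :=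
  (natDegree_pow_le_of_le k (natDegree_rowLin_le M i)).trans_eq (mul_one k)

theorem coeff_rowLin_pow_self (M : Matrix (Fin 2) (Fin 2) R) (i : Fin 2) (k : ℕ) :
    (rowLin M i ^ k).coeff k = M i 0 ^ k := by
  simpa [rowLin] using coeff_pow_of_natDegree_le (m := k) (natDegree_rowLin_le M i)

end RowLin

theorem AstarU_eq_sum (d : ℕ) (M : Matrix (Fin 2) (Fin 2) ℝ) (P : ℝ[X]) :
    AstarU d M P =
      ∑ ij ∈ antidiagonal d, C (P.coeff ij.1) * rowLin M 0 ^ ij.1 * rowLin M 1 ^ ij.2 := by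
  rw [Nat.sum_antidiagonal_eq_sum_range_succ_mk, AstarU, pullM, homog, MvPolynomial.eval₂_sum]
  simp [rowLin]

theorem natDegree_AstarU_le (d : ℕ) (M : Matrix (Fin 2) (Fin 2) ℝ) (P : ℝ[X]) :
    (AstarU d M P).natDegree ≤ d := by
  rw [AstarU_eq_sum]
  refine natDegree_sum_le_of_forall_le _ _ fun ij hij => ?_
  rw [← mem_antidiagonal.mp hij]
  exact natDegree_mul_le.trans (add_le_add ((natDegree_C_mul_le _ _).trans
    (natDegree_rowLin_pow_le M 0 _)) (natDegree_rowLin_pow_le M 1 _))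

theorem AstarU_add (d : ℕ) (M : Matrix (Fin 2) (Fin 2) ℝ) (P Q : ℝ[X]) :
    AstarU d M (P + Q) = AstarU d M P + AstarU d M Q := by
  simp only [AstarU_eq_sum, coeff_add, C_add, add_mul, sum_add_distrib]

theorem AstarU_smul (d : ℕ) (M : Matrix (Fin 2) (Fin 2) ℝ) (c : ℝ) (P : ℝ[X]) :
    AstarU d M (c • P) = c • AstarU d M P := by
  rw [AstarU_eq_sum, AstarU_eq_sum, smul_sum]
  refine sum_congr rfl fun _ _ => ?_
  rw [coeff_smul, smul_eq_mul, C_mul, smul_eq_C_mul, mul_assoc, mul_assoc, mul_assoc]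

theorem AstarU_X_pow {d k : ℕ} (M : Matrix (Fin 2) (Fin 2) ℝ) (hk : k ≤ d) :
    AstarU d M (X ^ k) = rowLin M 0 ^ k * rowLin M 1 ^ (d - k) := by
  rw [AstarU_eq_sum, sum_eq_single (k, d - k)]
  · simp
  · rintro ⟨i, j⟩ hij hne
    have hik : i ≠ k := fun h => hne (by simp_all; omega)
    simp [coeff_X_pow, hik]
  · simp; omega

theorem eval_AstarU {d : ℕ} (M : Matrix (Fin 2) (Fin 2) ℝ) {P : ℝ[X]} (hP : P.natDegree ≤ d)
    {t : ℝ} (ht : (rowLin M 1).eval t ≠ 0) :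
    (AstarU d M P).eval t =
      (rowLin M 1).eval t ^ d * P.eval ((rowLin M 0).eval t / (rowLin M 1).eval t) := by
  rw [eval_eq_sum_range' (Nat.lt_succ_of_le hP), AstarU_eq_sum, eval_finsetSum, mul_sum,
    Nat.sum_antidiagonal_eq_sum_range_succ_mk]
  refine sum_congr rfl fun k hk => ?_
  have hkd : k ≤ d := Nat.lt_succ_iff.mp (mem_range.mp hk)
  simp only [eval_mul, eval_C, eval_pow, div_pow]
  rw [← Nat.sub_add_cancel hkd, pow_add, Nat.add_sub_cancel]
  field_simp

theorem AstarU_mul {a b : ℕ} {M : Matrix (Fin 2) (Fin 2) ℝ} (hM : M.det ≠ 0) {F G : ℝ[X]}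
    (hF : F.natDegree ≤ a) (hG : G.natDegree ≤ b) :
    AstarU (a + b) M (F * G) = AstarU a M F * AstarU b M G := by
  refine eq_of_eval_eq_of_eval_ne_zero (rowLin_ne_zero hM 1) fun t ht => ?_
  rw [eval_mul, eval_AstarU M (natDegree_mul_le.trans (add_le_add hF hG)) ht,
    eval_AstarU M hF ht, eval_AstarU M hG ht, eval_mul]
  ring

theorem AstarU_matrix_mul {d : ℕ} {A B : Matrix (Fin 2) (Fin 2) ℝ} (hA : A.det ≠ 0)
    (hB : B.det ≠ 0) {P : ℝ[X]} (hP : P.natDegree ≤ d) :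
    AstarU d (A * B) P = AstarU d B (AstarU d A P) := by
  have hAB : (A * B).det ≠ 0 := by rw [Matrix.det_mul]; exact mul_ne_zero hA hB
  refine eq_of_eval_eq_of_eval_ne_zero
    (mul_ne_zero (rowLin_ne_zero hB 1) (rowLin_ne_zero hAB 1)) fun t ht => ?_
  rw [eval_mul, mul_ne_zero_iff] at ht
  obtain ⟨hvB, hvAB⟩ := ht
  have hrow : ∀ i, (rowLin A i).eval ((rowLin B 0).eval t / (rowLin B 1).eval t) =
      (rowLin (A * B) i).eval t / (rowLin B 1).eval t := fun i => by
    rw [eval_rowLin, eval_rowLin_mul]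
    field_simp
  have hvA : (rowLin A 1).eval ((rowLin B 0).eval t / (rowLin B 1).eval t) ≠ 0 := by
    rw [hrow]; exact div_ne_zero hvAB hvB
  rw [eval_AstarU B (natDegree_AstarU_le d A P) hvB, eval_AstarU A hP hvA,
    eval_AstarU (A * B) hP hvAB, hrow, hrow, div_div_div_cancel_right₀ hvB, div_pow]
  field_simp

theorem AstarU_mul_of_mem_degreeLT {a n : ℕ} {M : Matrix (Fin 2) (Fin 2) ℝ} (hM : M.det ≠ 0)
    {F u : ℝ[X]} (hF : F.natDegree ≤ a) (hu : u ∈ ℝ[X]_n) :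
    AstarU (a + n - 1) M (F * u) = AstarU a M F * AstarU (n - 1) M u := by
  rcases Nat.eq_zero_or_pos n with rfl | hn
  · simp_all [mem_degreeLT, AstarU_eq_sum]
  · rw [show a + n - 1 = a + (n - 1) by omega]
    exact AstarU_mul hM hF (natDegree_le_pred_of_mem_degreeLT hu)

def astarLinear (d : ℕ) (M : Matrix (Fin 2) (Fin 2) ℝ) : ℝ[X] →ₗ[ℝ] ℝ[X] where
  toFun := AstarU d M
  map_add' := AstarU_add d M
  map_smul' := AstarU_smul d M

theorem AstarU_mem_degreeLT {n : ℕ} (M : Matrix (Fin 2) (Fin 2) ℝ) {P : ℝ[X]}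
    (hP : P ∈ ℝ[X]_n) : AstarU (n - 1) M P ∈ ℝ[X]_n := by
  rcases Nat.eq_zero_or_pos n with rfl | hn
  · simp_all [mem_degreeLT, AstarU_eq_sum]
  · rw [mem_degreeLT]
    exact (degree_le_of_natDegree_le (natDegree_AstarU_le _ M P)).trans_lt
      (by exact_mod_cast Nat.sub_one_lt_of_lt hn)

def astarLT (M : Matrix (Fin 2) (Fin 2) ℝ) (n : ℕ) : Module.End ℝ ℝ[X]_n :=
  (astarLinear (n - 1) M).restrict fun _ => AstarU_mem_degreeLT M

@[simp]
theorem coe_astarLT_apply (M : Matrix (Fin 2) (Fin 2) ℝ) (n : ℕ) (P : ℝ[X]_n) :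
    (astarLT M n P : ℝ[X]) = AstarU (n - 1) M P :=
  rfl

theorem astarLT_mul {A B : Matrix (Fin 2) (Fin 2) ℝ} (hA : A.det ≠ 0) (hB : B.det ≠ 0) (n : ℕ) :
    astarLT (A * B) n = astarLT B n ∘ₗ astarLT A n := by
  ext P : 2
  exact AstarU_matrix_mul hA hB (natDegree_le_pred_of_mem_degreeLT P.2)

theorem toMatrix_astarLT_apply (M : Matrix (Fin 2) (Fin 2) ℝ) {n : ℕ} (i j : Fin n) :
    LinearMap.toMatrix (degreeLT.basis ℝ n) (degreeLT.basis ℝ n) (astarLT M n) i j =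
      (rowLin M 0 ^ (j : ℕ) * rowLin M 1 ^ (n - 1 - j)).coeff i := by
  rw [LinearMap.toMatrix_apply, degreeLT.basis_repr, coe_astarLT_apply, degreeLT.basis_val,
    AstarU_X_pow M (by omega)]

theorem det_astarLT_of_upper {M : Matrix (Fin 2) (Fin 2) ℝ} (h : M 1 0 = 0) (n : ℕ) :
    (astarLT M n).det = M.det ^ n.choose 2 := by
  have hrow : rowLin M 1 = C (M 1 1) := by simp [rowLin, h]
  rw [← LinearMap.det_toMatrix (degreeLT.basis ℝ n), Matrix.det_of_isUpperTriangular]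
  · simp_rw [toMatrix_astarLT_apply, hrow, ← C_pow, coeff_mul_C, coeff_rowLin_pow_self]
    rw [prod_pow_mul_pow_rev, Matrix.det_fin_two, h, mul_zero, sub_zero]
  · intro i j (hji : (j : ℕ) < i)
    rw [toMatrix_astarLT_apply, hrow, ← C_pow, coeff_mul_C,
      coeff_eq_zero_of_natDegree_lt ((natDegree_rowLin_pow_le M 0 _).trans_lt hji), zero_mul]

theorem det_astarLT_of_lower {M : Matrix (Fin 2) (Fin 2) ℝ} (h : M 0 1 = 0) (n : ℕ) :
    (astarLT M n).det = M.det ^ n.choose 2 := by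
  have hrow : ∀ j : ℕ, rowLin M 0 ^ j = C (M 0 0 ^ j) * X ^ j := by simp [rowLin, h, mul_pow]
  rw [← LinearMap.det_toMatrix (degreeLT.basis ℝ n), Matrix.det_of_isLowerTriangular]
  · simp_rw [toMatrix_astarLT_apply, hrow, mul_assoc, coeff_C_mul, coeff_X_pow_mul', le_refl,
      if_true, Nat.sub_self, coeff_zero_eq_eval_zero, eval_pow, eval_rowLin]
    rw [prod_pow_mul_pow_rev, Matrix.det_fin_two, h, zero_mul, sub_zero]
    simp
  · intro i j (hij : (i : ℕ) < j)
    rw [toMatrix_astarLT_apply, hrow, mul_assoc, coeff_C_mul, coeff_X_pow_mul',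
      if_neg (by omega), mul_zero]

theorem det_astarLT_mul {A B : Matrix (Fin 2) (Fin 2) ℝ} (hA : A.det ≠ 0) (hB : B.det ≠ 0)
    (n : ℕ) : (astarLT (A * B) n).det = (astarLT A n).det * (astarLT B n).det := by
  rw [astarLT_mul hA hB, LinearMap.det_comp, mul_comm]

theorem det_astarLT {M : Matrix (Fin 2) (Fin 2) ℝ} (hM : M.det ≠ 0) (n : ℕ) :
    (astarLT M n).det = M.det ^ n.choose 2 := by
  -- factor `M = S L U` with shears `S`, `L`; `S` is chosen so that the pivot `a` of `U` is nonzero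
  obtain ⟨s, a, ha, hM00⟩ : ∃ s a : ℝ, a ≠ 0 ∧ M 0 0 = a + s * M 1 0 := by
    by_cases h : M 0 0 = 0
    · refine ⟨1, -M 1 0, fun h' => hM ?_, by rw [h]; ring⟩
      rw [Matrix.det_fin_two, h, neg_eq_zero.mp h']
      ring
    · exact ⟨0, M 0 0, h, by ring⟩
  set S : Matrix (Fin 2) (Fin 2) ℝ := !![1, s; 0, 1]
  set L : Matrix (Fin 2) (Fin 2) ℝ := !![1, 0; M 1 0 / a, 1]
  set U : Matrix (Fin 2) (Fin 2) ℝ :=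
    !![a, M 0 1 - s * M 1 1; 0, M 1 1 - M 1 0 * (M 0 1 - s * M 1 1) / a]
  have hfac : M = S * (L * U) := by
    ext i j
    fin_cases i <;> fin_cases j <;> simp [S, L, U, Matrix.mul_apply, hM00, ha] <;> field_simp <;>
      ring
  have hS : S.det = 1 := by simp [S, Matrix.det_fin_two_of]
  have hL : L.det = 1 := by simp [L, Matrix.det_fin_two_of]
  have hU : U.det = M.det := by
    rw [Matrix.det_fin_two_of, Matrix.det_fin_two, hM00]
    field_simp
    ring
  rw [hfac, det_astarLT_mul (by simp [hS]) (by rw [Matrix.det_mul, hL, hU, one_mul]; exact hM),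
    det_astarLT_mul (by simp [hL]) (hU ▸ hM), det_astarLT_of_upper (by simp [S]),
    det_astarLT_of_lower (by simp [L]), det_astarLT_of_upper (by simp [U]), hS, hL, hU,
    one_pow, one_mul, one_mul, ← hfac]

theorem sylvesterMap_AstarU_comp {p q : ℕ} {M : Matrix (Fin 2) (Fin 2) ℝ} (hM : M.det ≠ 0)
    {P Q : ℝ[X]} (hP : P.natDegree ≤ p) (hQ : Q.natDegree ≤ q) :
    sylvesterMap (AstarU p M P) (AstarU q M Q) (natDegree_AstarU_le p M P)
        (natDegree_AstarU_le q M Q) ∘ₗ (astarLT M p).prodMap (astarLT M q) =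
      astarLT M (p + q) ∘ₗ sylvesterMap P Q hP hQ := by
  refine LinearMap.ext fun ⟨u, v⟩ => Subtype.ext ?_
  simp only [LinearMap.comp_apply, LinearMap.prodMap_apply, sylvesterMap_apply_coe,
    coe_astarLT_apply, AstarU_add]
  rw [AstarU_mul_of_mem_degreeLT hM hP v.2, add_comm p q, AstarU_mul_of_mem_degreeLT hM hQ u.2]

theorem resultant_AstarU {p q : ℕ} {M : Matrix (Fin 2) (Fin 2) ℝ} (hM : M.det ≠ 0)
    {P Q : ℝ[X]} (hP : P.natDegree ≤ p) (hQ : Q.natDegree ≤ q) :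
    resultant (AstarU p M P) (AstarU q M Q) p q = M.det ^ (p * q) * resultant P Q p q := by
  have h := congrArg (fun f => (LinearMap.toMatrix
    (((degreeLT.basis ℝ p).prod (degreeLT.basis ℝ q)).reindex finSumFinEquiv)
    (degreeLT.basis ℝ (p + q)) f).det) (sylvesterMap_AstarU_comp hM hP hQ)
  simp only [LinearMap.toMatrix_comp _
      (((degreeLT.basis ℝ p).prod (degreeLT.basis ℝ q)).reindex finSumFinEquiv),
    LinearMap.toMatrix_comp _ (degreeLT.basis ℝ (p + q)),
    Matrix.det_mul, toMatrix_sylvesterMap', LinearMap.det_toMatrix, LinearMap.det_prodMap,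
    det_astarLT hM, Nat.choose_two_add, pow_add] at h
  refine mul_right_cancel₀ (pow_ne_zero (p.choose 2 + q.choose 2) hM) ?_
  rw [resultant, resultant, pow_add, h]
  ring

/-- Both `(A^{*(m+1)}P)'` and `(m+1) A^{*(m+1)}P - X (A^{*(m+1)}P)'` have this shape, with `(x, y)`
the first, respectively the second, column of `A`. -/
theorem sum_antidiagonal_succ_eq_AstarU (M : Matrix (Fin 2) (Fin 2) ℝ) (P : ℝ[X]) (m : ℕ)
    (x y : ℝ) :
    ∑ ij ∈ antidiagonal (m + 1), C (P.coeff ij.1) *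
        (C x * C (ij.1 : ℝ) * rowLin M 0 ^ (ij.1 - 1) * rowLin M 1 ^ ij.2 +
          C y * C (ij.2 : ℝ) * rowLin M 0 ^ ij.1 * rowLin M 1 ^ (ij.2 - 1)) =
      C x * AstarU m M (derivative P) +
        C y * AstarU m M (C ((m + 1 : ℕ) : ℝ) * P - X * derivative P) := by
  rw [AstarU_eq_sum, AstarU_eq_sum, mul_sum, mul_sum]
  simp_rw [mul_add]
  rw [sum_add_distrib]
  refine congrArg₂ (· + ·) ?_ ?_
  · rw [Nat.sum_antidiagonal_succ]
    simp only [Nat.cast_zero, C_0, mul_zero, zero_mul, zero_add, Nat.add_sub_cancel]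
    refine sum_congr rfl fun ij _ => ?_
    rw [coeff_derivative, C_mul]
    push_cast
    ring
  · rw [Nat.sum_antidiagonal_succ']
    simp only [Nat.cast_zero, C_0, mul_zero, zero_mul, zero_add, Nat.add_sub_cancel]
    refine sum_congr rfl fun ij hij => ?_
    rw [coeff_sub, coeff_C_mul, coeff_X_mul_derivative, ← mem_antidiagonal.mp hij]
    push_cast
    simp only [map_sub, map_mul, map_add, map_natCast, map_one]
    ring

theorem derivative_AstarU_succ (M : Matrix (Fin 2) (Fin 2) ℝ) (P : ℝ[X]) (m : ℕ) :
    derivative (AstarU (m + 1) M P) =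
      C (M 0 0) * AstarU m M (derivative P) +
        C (M 1 0) * AstarU m M (C ((m + 1 : ℕ) : ℝ) * P - X * derivative P) := by
  rw [← sum_antidiagonal_succ_eq_AstarU, AstarU_eq_sum, derivative_sum]
  refine sum_congr rfl fun ij _ => ?_
  simp only [derivative_mul, derivative_C, derivative_pow, derivative_rowLin]
  ring

theorem euler_AstarU_succ (M : Matrix (Fin 2) (Fin 2) ℝ) (P : ℝ[X]) (m : ℕ) :
    C ((m + 1 : ℕ) : ℝ) * AstarU (m + 1) M P - X * derivative (AstarU (m + 1) M P) =
      C (M 0 1) * AstarU m M (derivative P) +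
        C (M 1 1) * AstarU m M (C ((m + 1 : ℕ) : ℝ) * P - X * derivative P) := by
  rw [← sum_antidiagonal_succ_eq_AstarU, AstarU_eq_sum, derivative_sum, mul_sum, mul_sum,
    ← sum_sub_distrib]
  refine sum_congr rfl fun ij hij => ?_
  obtain ⟨i, j⟩ := ij
  have hm : C ((m + 1 : ℕ) : ℝ) = C (i : ℝ) + C (j : ℝ) := by
    rw [← mem_antidiagonal.mp hij, Nat.cast_add, C_add]
  have hi := natCast_mul_pow_eq_mul_pow_pred (rowLin M 0) i
  have hj := natCast_mul_pow_eq_mul_pow_pred (rowLin M 1) j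
  simp only [derivative_mul, derivative_C, derivative_pow, derivative_rowLin, map_natCast] at hm ⊢
  have h0 : rowLin M 0 = C (M 0 0) * X + C (M 0 1) := rfl
  have h1 : rowLin M 1 = C (M 1 0) * X + C (M 1 1) := rfl
  linear_combination (C (P.coeff i) * rowLin M 1 ^ j) * hi + (C (P.coeff i) * rowLin M 0 ^ i) * hj
    + (C (P.coeff i) * i * rowLin M 0 ^ (i - 1) * rowLin M 1 ^ j) * h0
    + (C (P.coeff i) * j * rowLin M 0 ^ i * rowLin M 1 ^ (j - 1)) * h1
    + (C (P.coeff i) * rowLin M 0 ^ i * rowLin M 1 ^ j) * hm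

theorem natDegree_euler_le {m : ℕ} {P : ℝ[X]} (hP : P.natDegree ≤ m + 1) :
    (C ((m + 1 : ℕ) : ℝ) * P - X * derivative P).natDegree ≤ m := by
  rw [natDegree_le_iff_coeff_eq_zero]
  intro k hk
  rw [coeff_sub, coeff_C_mul, coeff_X_mul_derivative]
  rcases eq_or_lt_of_le (Nat.succ_le_of_lt hk) with rfl | hk'
  · ring
  · rw [coeff_eq_zero_of_natDegree_lt (hP.trans_lt hk'), mul_zero, mul_zero, sub_zero]

theorem discFixed_AstarU {p : ℕ} {M : Matrix (Fin 2) (Fin 2) ℝ} (hM : M.det ≠ 0) {P : ℝ[X]}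
    (hP : P.natDegree ≤ p) :
    discFixed p (AstarU p M P) = M.det ^ (p * (p - 1)) * discFixed p P := by
  cases p with
  | zero => simp [discFixed, resFixed]
  | succ m =>
    have hP' : (derivative P).natDegree ≤ m := (natDegree_derivative_le P).trans (by omega)
    rw [discFixed, discFixed, Nat.add_sub_cancel, euler_AstarU_succ, derivative_AstarU_succ,
      resFixed_eq_resultant, resFixed_eq_resultant,
      resultant_C_mul_add_C_mul (natDegree_AstarU_le m M _) (natDegree_AstarU_le m M _),
      resultant_AstarU hM hP' (natDegree_euler_le hP), ← Matrix.det_fin_two]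
    ring

/-- For all `p, q ∈ ℕ`, `P ∈ ℝ[x]_{≤p}`, `Q ∈ ℝ[x]_{≤q}` and `A ∈ GL(2,ℝ)`:
`Res^{p,q}(A^{*p}P, A^{*q}Q) = det(A)^{pq} · Res^{p,q}(P,Q)` and
`Disc^{p}(A^{*p}P) = det(A)^{p(p−1)} · Disc^{p}(P)`. -/
theorem resultant_discriminant_covariance (p q : ℕ) (P Q : Polynomial ℝ)
    (hP : P.natDegree ≤ p) (hQ : Q.natDegree ≤ q) (A : GL (Fin 2) ℝ) :
    resFixed p q (AstarU p (A : Matrix (Fin 2) (Fin 2) ℝ) P)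
        (AstarU q (A : Matrix (Fin 2) (Fin 2) ℝ) Q)
      = ((A : Matrix (Fin 2) (Fin 2) ℝ).det) ^ (p * q) * resFixed p q P Q ∧
    discFixed p (AstarU p (A : Matrix (Fin 2) (Fin 2) ℝ) P)
      = ((A : Matrix (Fin 2) (Fin 2) ℝ).det) ^ (p * (p - 1)) * discFixed p P := by
  have hA : (A : Matrix (Fin 2) (Fin 2) ℝ).det ≠ 0 :=
    ((Matrix.isUnit_iff_isUnit_det _).mp A.isUnit).ne_zero
  refine ⟨?_, discFixed_AstarU hA hP⟩
  rw [resFixed_eq_resultant, resFixed_eq_resultant, resultant_AstarU hA hP hQ]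
end
end

section
/- Let P ∈ ℝ[x₁,…,x_{n−1};x_n] have degree at most d in x_n and let H^d(P) denote its homogenization in the last variable with respect to degree d. Then for every x ∈ ℝ^{n−1} and x_n ∈ ℝ, the order of P at (x,x_n) equals the order of H^d(P) at (x,(x_n,1)): ord(P,(x,x_n)) = ord(H^d(P),(x,(x_n,1))). -/
/-! Put `F(x,t) = P(x,t)` and `G(x,(s,y)) = H^d(P)(x,(s,y))`. Then `F(x,t) = G(x,(t,1))`, and
near any point with `y ≠ 0` also `G(x,(s,y)) = y^d F(x,s/y)`. The order at a point does not drop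
under composition with a smooth map (Faà di Bruno) or multiplication by a smooth function
(Leibniz), so each identity gives one of the two inequalities. -/

open Filter Topology Polynomial Finset
open scoped ContDiff

section
variable {𝕜 E F G : Type*} [NontriviallyNormedField 𝕜] [NormedAddCommGroup E] [NormedSpace 𝕜 E]
  [NormedAddCommGroup F] [NormedSpace 𝕜 F] [NormedAddCommGroup G] [NormedSpace 𝕜 G]

theorem iteratedFDeriv_comp_eq_zero {g : F → G} {f : E → F} {x : E} {n : ℕ}
    (hg : ContDiffAt 𝕜 n g (f x)) (hf : ContDiffAt 𝕜 n f x)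
    (hg0 : ∀ k ≤ n, iteratedFDeriv 𝕜 k g (f x) = 0) :
    ∀ i ≤ n, iteratedFDeriv 𝕜 i (g ∘ f) x = 0 := by
  intro i hi
  rw [iteratedFDeriv_comp hg hf (by exact_mod_cast hi)]
  refine Finset.sum_eq_zero fun c _ => ?_
  ext v
  simp [ftaylorSeries, hg0 c.length (c.length_le.trans hi)]

theorem iteratedFDeriv_mul_eq_zero {A : Type*} [NormedRing A] [NormedAlgebra 𝕜 A]
    {φ g : E → A} {x : E} {n : ℕ} (hφ : ContDiffAt 𝕜 n φ x) (hg : ContDiffAt 𝕜 n g x)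
    (hg0 : ∀ k ≤ n, iteratedFDeriv 𝕜 k g x = 0) :
    ∀ i ≤ n, iteratedFDeriv 𝕜 i (fun y => φ y * g y) x = 0 := by
  obtain ⟨U, hU, hUo, hxU⟩ :=
    mem_nhds_iff.1 ((hφ.eventually (by simp)).and (hg.eventually (by simp)))
  intro i hi
  rw [← norm_le_zero_iff, ← iteratedFDerivWithin_of_isOpen i hUo hxU]
  refine (norm_iteratedFDerivWithin_mul_le (fun y hy => (hU hy).1.contDiffWithinAt)
    (fun y hy => (hU hy).2.contDiffWithinAt) hUo.uniqueDiffOn hxU (by exact_mod_cast hi)).trans ?_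
  refine (Finset.sum_eq_zero fun k hk => ?_).le
  rw [iteratedFDerivWithin_of_isOpen (i - k) hUo hxU, hg0 (i - k) (by omega)]
  simp

end

section
variable {E F : Type*} [NormedAddCommGroup E] [NormedSpace ℝ E]
  [NormedAddCommGroup F] [NormedSpace ℝ F]

theorem ordAt_le_ordAt_of_forall {f : E → ℝ} {g : F → ℝ} {v : E} {w : F}
    (h : ∀ n : ℕ, (∀ k ≤ n, iteratedFDeriv ℝ k f v = 0) →
      ∀ k ≤ n, iteratedFDeriv ℝ k g w = 0) :
    ordAt f v ≤ ordAt g w := by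
  refine le_sInf ?_
  rintro _ ⟨n, rfl, hn⟩
  obtain ⟨k, hkn, hk⟩ : ∃ k ≤ n, iteratedFDeriv ℝ k f v ≠ 0 := by
    by_contra! hf
    exact hn (h n hf n le_rfl)
  calc ordAt f v ≤ k := sInf_le ⟨k, rfl, hk⟩
    _ ≤ n := by exact_mod_cast hkn

theorem ordAt_congr {f g : E → ℝ} {v : E} (h : f =ᶠ[𝓝 v] g) : ordAt f v = ordAt g v := by
  simp only [ordAt, fun n => (h.iteratedFDeriv ℝ n).eq_of_nhds]

theorem ordAt_le_ordAt_comp {f : F → ℝ} {B : E → F} {v : E}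
    (hf : ContDiffAt ℝ ∞ f (B v)) (hB : ContDiffAt ℝ ∞ B v) :
    ordAt f (B v) ≤ ordAt (f ∘ B) v :=
  ordAt_le_ordAt_of_forall fun _ => iteratedFDeriv_comp_eq_zero
    (hf.of_le (by exact_mod_cast le_top)) (hB.of_le (by exact_mod_cast le_top))

theorem ordAt_le_ordAt_mul {φ g : E → ℝ} {v : E}
    (hφ : ContDiffAt ℝ ∞ φ v) (hg : ContDiffAt ℝ ∞ g v) :
    ordAt g v ≤ ordAt (fun y => φ y * g y) v :=
  ordAt_le_ordAt_of_forall fun _ => iteratedFDeriv_mul_eq_zero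
    (hφ.of_le (by exact_mod_cast le_top)) (hg.of_le (by exact_mod_cast le_top))

end

theorem MvPolynomial.contDiff_eval {σ : Type*} [Fintype σ] (q : MvPolynomial σ ℝ) :
    ContDiff ℝ ∞ fun x : σ → ℝ => MvPolynomial.eval x q := by
  induction q using MvPolynomial.induction_on with
  | C a => simpa using contDiff_const
  | add p q hp hq => simpa using hp.add hq
  | mul_X p i hp => simpa using hp.mul (contDiff_apply ℝ ℝ i)

theorem eval_homog (d : ℕ) (q : Polynomial ℝ) (v : Fin 2 → ℝ) :
    MvPolynomial.eval v (homog d q) =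
      ∑ k ∈ range (d + 1), q.coeff k * v 0 ^ k * v 1 ^ (d - k) := by
  simp [homog]

theorem eval_homog_vecCons_one {d : ℕ} {q : Polynomial ℝ} (hq : q.natDegree ≤ d) (t : ℝ) :
    MvPolynomial.eval ![t, 1] (homog d q) = q.eval t := by
  simp [eval_homog, eval_eq_sum_range' (Nat.lt_succ_of_le hq)]

theorem eval_homog_of_ne_zero {d : ℕ} {q : Polynomial ℝ} (hq : q.natDegree ≤ d) {v : Fin 2 → ℝ}
    (hv : v 1 ≠ 0) : MvPolynomial.eval v (homog d q) = v 1 ^ d * q.eval (v 0 / v 1) := by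
  rw [eval_homog, eval_eq_sum_range' (Nat.lt_succ_of_le hq), mul_sum]
  refine sum_congr rfl fun k hk => ?_
  rw [div_pow, ← pow_sub_mul_pow (v 1) (Nat.lt_succ_iff.mp (mem_range.mp hk))]
  field_simp

theorem contDiff_eval_homog_evalP {m : ℕ} (d : ℕ) (P : Polynomial (MvPolynomial (Fin m) ℝ)) :
    ContDiff ℝ ∞ fun p : (Fin m → ℝ) × (Fin 2 → ℝ) =>
      MvPolynomial.eval p.2 (homog d (evalP P p.1)) := by
  simp only [eval_homog, evalP, coeff_map]
  have hcoeff := fun k => (P.coeff k).contDiff_eval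
  fun_prop

/-- Let `P` be a polynomial in `x₁,…,x_m;x_n` of degree at most `d` in `x_n`,
and let `H^d(P)` be its homogenization in the last variable with respect to degree `d`. Then
for every `x ∈ ℝ^m` and `x_n ∈ ℝ`: `ord(P,(x,x_n)) = ord(H^d(P),(x,(x_n,1)))`. -/
theorem order_homogenization (m d : ℕ) (P : Polynomial (MvPolynomial (Fin m) ℝ))
    (hP : P.natDegree ≤ d) (x : Fin m → ℝ) (xn : ℝ) :
    ordAt (fun p : (Fin m → ℝ) × ℝ => Polynomial.eval p.2 (evalP P p.1)) (x, xn)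
      = ordAt (fun p : (Fin m → ℝ) × (Fin 2 → ℝ) =>
          MvPolynomial.eval p.2 (homog d (evalP P p.1))) (x, ![xn, 1]) := by
  set F := fun p : (Fin m → ℝ) × ℝ => Polynomial.eval p.2 (evalP P p.1)
  set G := fun p : (Fin m → ℝ) × (Fin 2 → ℝ) => MvPolynomial.eval p.2 (homog d (evalP P p.1))
  let A : (Fin m → ℝ) × ℝ → (Fin m → ℝ) × (Fin 2 → ℝ) := fun p => (p.1, ![p.2, 1])
  let B : (Fin m → ℝ) × (Fin 2 → ℝ) → (Fin m → ℝ) × ℝ := fun p => (p.1, p.2 0 / p.2 1)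
  have hdeg (y : Fin m → ℝ) : (evalP P y).natDegree ≤ d := natDegree_map_le.trans hP
  have hG : ContDiff ℝ ∞ G := contDiff_eval_homog_evalP d P
  have hA : ContDiff ℝ ∞ A :=
    contDiff_fst.prodMk (contDiff_pi.2 (Fin.forall_fin_two.2 ⟨contDiff_snd, contDiff_const⟩))
  have hF : F = G ∘ A := funext fun p => (eval_homog_vecCons_one (hdeg p.1) p.2).symm
  have hFs : ContDiff ℝ ∞ F := hF ▸ hG.comp hA
  have hB : ContDiffAt ℝ ∞ B (x, ![xn, 1]) := by
    fun_prop (disch := simp)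
  have hGB : G =ᶠ[𝓝 (x, ![xn, 1])] fun p => p.2 1 ^ d * F (B p) := by
    filter_upwards [(continuous_apply 1).comp continuous_snd |>.continuousAt.eventually_ne
      (by simp : (x, ![xn, (1 : ℝ)]).2 1 ≠ 0)] with p hp
    exact eval_homog_of_ne_zero (hdeg p.1) hp
  refine le_antisymm ?_ (hF ▸ ordAt_le_ordAt_comp hG.contDiffAt hA.contDiffAt)
  calc ordAt F (x, xn) = ordAt F (B (x, ![xn, 1])) := by simp [B]
    _ ≤ ordAt (F ∘ B) (x, ![xn, 1]) := ordAt_le_ordAt_comp hFs.contDiffAt hB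
    _ ≤ ordAt (fun p => p.2 1 ^ d * F (B p)) (x, ![xn, 1]) :=
      ordAt_le_ordAt_mul (by fun_prop) (hFs.contDiffAt.comp _ hB)
    _ = ordAt G (x, ![xn, 1]) := (ordAt_congr hGB).symm
end

section
/- Let S ⊆ ℝ^{n−1} and let P ∈ ℝ[x₁,…,x_{n−1};x_n] have degree d_n in x_n, written P(x,x_n)=∑_{k=0}^{d_n} c_k(x)x_n^k. Suppose there exists k ∈ {0,…,d_n} such that for all x ∈ S one has c_{d_n−k}(x) ≠ 0 and c_{d_n−j}(x) = 0 for all j with 0 ≤ j ≤ k−1. Then P is projectively delineable on S if and only if P is delineable on S. -/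
/-! On `S` the polynomial `P(x,·)` is nonzero of exact degree `d_n - k`, so the projective roots of
`H^{d_n}(P)(x,·)` are the points `φ(t)` for the real roots `t`, with the same multiplicities,
together with `∞`, of multiplicity `k`, when `k > 0`. Since `φ` is a homeomorphism onto
`ℝP¹ ∖ {∞}`, real root functions are the same as projective ones avoiding `∞` and covering the
real roots. When `k > 0`, exactly one projective root function passes through `∞` at each point;
as `{∞}` is closed, its index is locally constant along `S`, and swapping it with a fixed index
of the same multiplicity leaves the others continuous with constant multiplicities.
Conversely a system of real root functions is completed by the constant function `∞`. -/

theorem fin_two_sq_add_sq_ne_zero {v : Fin 2 → ℝ} (hv : v ≠ 0) : v 0 ^ 2 + v 1 ^ 2 ≠ 0 := by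
  intro h
  refine hv (funext fun i => ?_)
  fin_cases i <;> simp <;> nlinarith [sq_nonneg (v 0), sq_nonneg (v 1)]

theorem Polynomial.natDegree_eq_sub_of_coeff {R : Type*} [Semiring R] {Q : Polynomial R}
    {d k : ℕ} (hd : Q.natDegree ≤ d) (hk : Q.coeff (d - k) ≠ 0)
    (hzero : ∀ j < k, Q.coeff (d - j) = 0) : Q.natDegree = d - k := by
  refine le_antisymm (natDegree_le_iff_coeff_eq_zero.2 fun i hi => ?_) (le_natDegree_of_ne_zero hk)
  rcases le_or_gt i d with hid | hid
  · rw [← Nat.sub_sub_self hid]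
    exact hzero _ (by omega)
  · exact coeff_eq_zero_of_natDegree_lt (hd.trans_lt hid)

section Homogenize

open Polynomial

theorem homog_eq_homogenize (d : ℕ) (Q : ℝ[X]) : homog d Q = Q.homogenize d := by
  rw [homog, homogenize, Finset.Nat.sum_antidiagonal_eq_sum_range_succ_mk]
  refine Finset.sum_congr rfl fun k _ => ?_
  rw [MvPolynomial.monomial_eq, Finsupp.prod_fintype _ _ (by simp), Fin.prod_univ_two]
  simp [mul_assoc]

theorem eval_homogenize_of_snd_eq_zero (Q : ℝ[X]) (d : ℕ) {v : Fin 2 → ℝ} (hv : v 1 = 0) :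
    MvPolynomial.eval v (Q.homogenize d) = Q.coeff d * v 0 ^ d := by
  rw [← homog_eq_homogenize, homog, map_sum, Finset.sum_eq_single d]
  · simp
  · intro j hj hne
    have : j < d := by simp at hj; omega
    simp [hv, Nat.sub_ne_zero_of_lt this]
  · simp

end Homogenize

section HasProjRootOfMult

open MvPolynomial

variable {g : MvPolynomial (Fin 2) ℝ} {v : Fin 2 → ℝ} {μ : ℕ}

theorem HasProjRootOfMult.emultiplicity_eq (hv : v ≠ 0) (h : HasProjRootOfMult g v μ) :
    emultiplicity (C (v 1) * X 0 - C (v 0) * X 1) g = μ := by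
  obtain ⟨q, rfl, hq⟩ := h
  refine emultiplicity_eq_coe.2 ⟨dvd_mul_right _ _, fun ⟨q', hq'⟩ => hq ?_⟩
  have hL : (C (v 1) * X 0 - C (v 0) * X 1 : MvPolynomial (Fin 2) ℝ) ≠ 0 := by
    intro h0
    have := congrArg (eval ![v 1, -v 0]) h0
    simp only [map_sub, map_mul, eval_C, eval_X, map_zero] at this
    exact fin_two_sq_add_sq_ne_zero hv (by simp at this; linarith)
  rw [pow_succ, mul_assoc] at hq'
  rw [mul_left_cancel₀ (pow_ne_zero _ hL) hq', map_mul]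
  simp [mul_comm]

theorem HasProjRootOfMult.unique (hv : v ≠ 0) {μ' : ℕ} (h : HasProjRootOfMult g v μ)
    (h' : HasProjRootOfMult g v μ') : μ = μ' := by
  exact_mod_cast (h.emultiplicity_eq hv).symm.trans (h'.emultiplicity_eq hv)

theorem hasProjRootOfMult_of_eq {a : ℝ} (ha : a ≠ 0) {q : MvPolynomial (Fin 2) ℝ}
    (hg : g = (C a * (C (v 1) * X 0 - C (v 0) * X 1)) ^ μ * q) (hq : eval v q ≠ 0) :
    HasProjRootOfMult g v μ :=
  ⟨C (a ^ μ) * q, by rw [hg, mul_pow, map_pow]; ring, by simpa [ha] using hq⟩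

end HasProjRootOfMult

section RootsOfHomogenization

open Polynomial

variable {Q : ℝ[X]} {d : ℕ}

theorem hasProjRootOfMult_homogenize_of_snd_ne_zero (hQ : Q ≠ 0) (hd : Q.natDegree ≤ d)
    {v : Fin 2 → ℝ} (hv : v 1 ≠ 0) :
    HasProjRootOfMult (Q.homogenize d) v (Q.rootMultiplicity (v 0 / v 1)) := by
  set t := v 0 / v 1
  set μ := Q.rootMultiplicity t
  set R := Q /ₘ (X - C t) ^ μ
  have hQR : (X - C t) ^ μ * R = Q := pow_mul_divByMonic_rootMultiplicity_eq Q t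
  have hRt : R.eval t ≠ 0 := eval_divByMonic_pow_rootMultiplicity_ne_zero t hQ
  have hR : R ≠ 0 := by rintro h; simp [h] at hRt
  have hdeg : μ + R.natDegree = Q.natDegree := by
    rw [← hQR, natDegree_mul (pow_ne_zero _ (X_sub_C_ne_zero t)) hR, natDegree_pow,
      natDegree_X_sub_C, mul_one]
  have hlin : ((X - C t) ^ μ).homogenize μ =
      (MvPolynomial.C (v 1)⁻¹ * (MvPolynomial.C (v 1) * MvPolynomial.X 0
        - MvPolynomial.C (v 0) * MvPolynomial.X 1)) ^ μ := by
    refine homogenize_eq_of_isHomogeneous ?_ ?_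
    · have h1 : (MvPolynomial.C (v 1)⁻¹ * (MvPolynomial.C (v 1) * MvPolynomial.X 0
          - MvPolynomial.C (v 0) * MvPolynomial.X 1) : MvPolynomial (Fin 2) ℝ).IsHomogeneous 1 :=
        (MvPolynomial.isHomogeneous_C _ _).mul
          (((MvPolynomial.isHomogeneous_C _ _).mul (MvPolynomial.isHomogeneous_X ℝ 0)).sub
            ((MvPolynomial.isHomogeneous_C _ _).mul (MvPolynomial.isHomogeneous_X ℝ 1)))
      simpa using h1.pow μ
    · simp only [map_pow, map_mul, map_sub, MvPolynomial.aeval_C, MvPolynomial.aeval_X,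
        algebraMap_eq, Matrix.cons_val_zero, Matrix.cons_val_one]
      rw [mul_sub, ← mul_assoc, ← C_mul, inv_mul_cancel₀ hv, C_1, one_mul, ← mul_assoc, ← C_mul,
        inv_mul_eq_div, mul_one]
  have hsplit := homogenize_mul ((X - C t) ^ μ) R (m := μ) (n := d - μ) (by simp) (by omega)
  rw [Nat.add_sub_cancel' (by omega), hQR, hlin] at hsplit
  refine hasProjRootOfMult_of_eq (inv_ne_zero hv) hsplit ?_
  rw [eval_homogenize (by omega) _ hv]
  exact mul_ne_zero hRt (pow_ne_zero _ hv)

theorem hasProjRootOfMult_homogenize_of_snd_eq_zero (hQ : Q ≠ 0) (hd : Q.natDegree ≤ d)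
    {v : Fin 2 → ℝ} (hv0 : v 0 ≠ 0) (hv1 : v 1 = 0) :
    HasProjRootOfMult (Q.homogenize d) v (d - Q.natDegree) := by
  have hsplit := homogenize_mul Q 1 le_rfl (natDegree_one.trans_le (Nat.zero_le (d - Q.natDegree)))
  rw [mul_one, Nat.add_sub_cancel' hd, homogenize_one] at hsplit
  have hX : (MvPolynomial.X 1 : MvPolynomial (Fin 2) ℝ) = MvPolynomial.C (-v 0)⁻¹ *
      (MvPolynomial.C (v 1) * MvPolynomial.X 0 - MvPolynomial.C (v 0) * MvPolynomial.X 1) := by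
    rw [hv1, map_zero, zero_mul, zero_sub, mul_neg, ← mul_assoc, ← map_mul, ← neg_mul, ← map_neg,
      inv_neg, neg_mul, neg_neg, inv_mul_cancel₀ hv0, map_one, one_mul]
  rw [hX, mul_comm] at hsplit
  refine hasProjRootOfMult_of_eq (inv_ne_zero (neg_ne_zero.2 hv0)) hsplit ?_
  rw [eval_homogenize_of_snd_eq_zero _ _ hv1, coeff_natDegree]
  exact mul_ne_zero (leadingCoeff_ne_zero.2 hQ) (pow_ne_zero _ hv0)

end RootsOfHomogenization

namespace RP1

open Projectivization OnePoint

noncomputable def ofReal (t : ℝ) : RP1 := equivProjectivization ℝ t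

noncomputable def infty : RP1 := equivProjectivization ℝ ∞

theorem ofReal_eq_mk (t : ℝ) : ofReal t = mk ℝ ![t, 1] (by simp) := rfl

theorem infty_eq_mk : infty = mk ℝ ![1, 0] (by simp) := rfl

theorem ofReal_injective : Function.Injective ofReal :=
  (equivProjectivization ℝ).injective.comp coe_injective

theorem ofReal_ne_infty (t : ℝ) : ofReal t ≠ infty :=
  fun h => coe_ne_infty t ((equivProjectivization ℝ).injective h)

theorem eq_infty_or_exists_eq_ofReal (p : RP1) : p = infty ∨ ∃ t, p = ofReal t := by
  obtain ⟨q, rfl⟩ := (equivProjectivization ℝ).surjective p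
  induction q using OnePoint.rec with
  | infty => exact Or.inl rfl
  | coe t => exact Or.inr ⟨t, rfl⟩

theorem mk_eq_infty_iff {v : Fin 2 → ℝ} (hv : v ≠ 0) : mk ℝ v hv = infty ↔ v 1 = 0 := by
  rw [infty, ← Equiv.symm_apply_eq, equivProjectivization_symm_apply_mk]
  split_ifs with h <;> simp [h]

theorem mk_eq_ofReal_iff {v : Fin 2 → ℝ} (hv : v ≠ 0) {t : ℝ} :
    mk ℝ v hv = ofReal t ↔ v 1 ≠ 0 ∧ v 0 / v 1 = t := by
  rw [ofReal, ← Equiv.symm_apply_eq, equivProjectivization_symm_apply_mk]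
  split_ifs with h <;> simp [h, inv_mul_eq_div]

theorem fst_ne_zero_of_mk_eq_infty {v : Fin 2 → ℝ} {hv : v ≠ 0} (h : mk ℝ v hv = infty) :
    v 0 ≠ 0 := fun h0 =>
  hv (funext fun i => by fin_cases i <;> simp [h0, (mk_eq_infty_iff hv).1 h])

theorem continuous_ofReal : Continuous ofReal :=
  continuous_quotient_mk'.comp (Continuous.subtype_mk (by fun_prop) _)

/-- `(x : y) ↦ (x y, y²) / (x² + y²)` is well defined and continuous on all of `ℝP¹`; away
from `∞` the quotient of its components is the affine coordinate `x / y`. -/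
noncomputable def quadChart : RP1 → ℝ × ℝ :=
  Projectivization.lift
    (fun v => (v.1 0 * v.1 1 / (v.1 0 ^ 2 + v.1 1 ^ 2), v.1 1 ^ 2 / (v.1 0 ^ 2 + v.1 1 ^ 2)))
    (by
      rintro ⟨-, ha⟩ ⟨b, hb⟩ t rfl
      have ht : t ≠ 0 := by rintro rfl; simp at ha
      have := fin_two_sq_add_sq_ne_zero hb
      simp only [Pi.smul_apply, smul_eq_mul, Prod.mk.injEq]
      constructor <;> field_simp)

noncomputable def toReal (p : RP1) : ℝ := (quadChart p).1 / (quadChart p).2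

theorem quadChart_snd_eq_zero_iff (p : RP1) : (quadChart p).2 = 0 ↔ p = infty := by
  induction p using Projectivization.ind with
  | h v hv => simp [quadChart, mk_eq_infty_iff, fin_two_sq_add_sq_ne_zero hv]

theorem continuous_quadChart : Continuous quadChart := by
  have hden (v : {v : Fin 2 → ℝ // v ≠ 0}) : v.1 0 ^ 2 + v.1 1 ^ 2 ≠ 0 :=
    fin_two_sq_add_sq_ne_zero v.2
  have h0 : Continuous fun v : {v : Fin 2 → ℝ // v ≠ 0} => v.1 0 :=
    (continuous_apply 0).comp continuous_subtype_val
  have h1 : Continuous fun v : {v : Fin 2 → ℝ // v ≠ 0} => v.1 1 :=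
    (continuous_apply 1).comp continuous_subtype_val
  have hsq : Continuous fun v : {v : Fin 2 → ℝ // v ≠ 0} => v.1 0 ^ 2 + v.1 1 ^ 2 :=
    (h0.pow 2).add (h1.pow 2)
  exact Continuous.quotient_lift (((h0.mul h1).div hsq hden).prodMk ((h1.pow 2).div hsq hden)) _

theorem toReal_ofReal (t : ℝ) : toReal (ofReal t) = t := by
  have : t ^ 2 + 1 ≠ 0 := by positivity
  simp [toReal, quadChart, ofReal_eq_mk]
  field_simp

theorem ofReal_toReal {p : RP1} (hp : p ≠ infty) : ofReal (toReal p) = p := by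
  obtain rfl | ⟨t, rfl⟩ := eq_infty_or_exists_eq_ofReal p
  · exact absurd rfl hp
  · rw [toReal_ofReal]

theorem continuousAt_toReal {p : RP1} (hp : p ≠ infty) : ContinuousAt toReal p :=
  (continuous_fst.comp continuous_quadChart).continuousAt.div
    (continuous_snd.comp continuous_quadChart).continuousAt
    (by rwa [Ne, quadChart_snd_eq_zero_iff])

theorem isClosed_singleton_infty : IsClosed {infty} := by
  have : {infty} = (fun p => (quadChart p).2) ⁻¹' {0} := by
    ext p
    simp [quadChart_snd_eq_zero_iff]
  rw [this]
  exact isClosed_singleton.preimage (continuous_snd.comp continuous_quadChart)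

end RP1

section ProjectiveRoots

open Polynomial RP1 Projectivization

variable {Q : ℝ[X]} {d : ℕ} {v : Fin 2 → ℝ} (hv : v ≠ 0)

theorem eval_homog_eq_zero_iff_of_mk_eq_ofReal (hd : Q.natDegree ≤ d) {t : ℝ}
    (h : mk ℝ v hv = ofReal t) : MvPolynomial.eval v (homog d Q) = 0 ↔ Q.eval t = 0 := by
  obtain ⟨hv1, rfl⟩ := (mk_eq_ofReal_iff hv).1 h
  rw [homog_eq_homogenize, eval_homogenize hd _ hv1, mul_eq_zero, or_iff_left (pow_ne_zero _ hv1)]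

theorem hasProjRootOfMult_homog_iff_of_mk_eq_ofReal (hQ : Q ≠ 0) (hd : Q.natDegree ≤ d) {t : ℝ}
    (h : mk ℝ v hv = ofReal t) {μ : ℕ} :
    HasProjRootOfMult (homog d Q) v μ ↔ μ = Q.rootMultiplicity t := by
  obtain ⟨hv1, rfl⟩ := (mk_eq_ofReal_iff hv).1 h
  have hroot := hasProjRootOfMult_homogenize_of_snd_ne_zero hQ hd hv1
  rw [homog_eq_homogenize]
  exact ⟨fun hμ => hμ.unique hv hroot, fun hμ => hμ ▸ hroot⟩

theorem eval_homog_eq_zero_iff_of_mk_eq_infty (hQ : Q ≠ 0) (hd : Q.natDegree ≤ d)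
    (h : mk ℝ v hv = infty) : MvPolynomial.eval v (homog d Q) = 0 ↔ Q.natDegree < d := by
  rw [homog_eq_homogenize, eval_homogenize_of_snd_eq_zero _ _ ((mk_eq_infty_iff hv).1 h),
    mul_eq_zero, or_iff_left (pow_ne_zero _ (fst_ne_zero_of_mk_eq_infty h))]
  refine ⟨fun hd' => hd.lt_of_ne fun he => ?_, coeff_eq_zero_of_natDegree_lt⟩
  rw [← he, coeff_natDegree, leadingCoeff_eq_zero] at hd'
  exact hQ hd'

theorem hasProjRootOfMult_homog_iff_of_mk_eq_infty (hQ : Q ≠ 0) (hd : Q.natDegree ≤ d)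
    (h : mk ℝ v hv = infty) {μ : ℕ} :
    HasProjRootOfMult (homog d Q) v μ ↔ μ = d - Q.natDegree := by
  have hroot := hasProjRootOfMult_homogenize_of_snd_eq_zero hQ hd
    (fst_ne_zero_of_mk_eq_infty h) ((mk_eq_infty_iff hv).1 h)
  rw [homog_eq_homogenize]
  exact ⟨fun hμ => hμ.unique hv hroot, fun hμ => hμ ▸ hroot⟩

end ProjectiveRoots

open Filter Topology in
theorem exists_reindex_avoiding {X Y α : Type*} [TopologicalSpace X] [TopologicalSpace Y]
    {S : Set X} {r : ℕ} {θ : Fin r → X → Y} {p : Y} (hp : IsClosed {p})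
    (hcont : ∀ l, ContinuousOn (θ l) S) (hdisj : ∀ x ∈ S, ∀ l l', l ≠ l' → θ l x ≠ θ l' x)
    (hhit : ∀ x ∈ S, ∃ l, θ l x = p) (w : Fin r → α) {a : α}
    (hw : ∀ x ∈ S, ∀ l, θ l x = p → w l = a) :
    ∃ (r' : ℕ) (σ : X → Fin r' → Fin r), (∀ x, Function.Injective (σ x)) ∧
      (∀ x ∈ S, ∀ l, θ l x ≠ p ↔ ∃ j, σ x j = l) ∧
      (∀ j, ContinuousOn (fun x => θ (σ x j) x) S) ∧
      (∀ j, ∃ l, ∀ x ∈ S, w (σ x j) = w l) := by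
  rcases r with _ | r
  · exact ⟨0, fun _ => id, fun _ => Function.injective_id, fun _ _ l => l.elim0, fun j => j.elim0,
      fun j => j.elim0⟩
  choose! ι hι using hhit
  have hι_iff : ∀ x ∈ S, ∀ l, θ l x = p ↔ l = ι x := fun x hx l =>
    ⟨fun h => by_contra fun hne => hdisj x hx l (ι x) hne (h.trans (hι x hx).symm),
      fun h => h ▸ hι x hx⟩
  have hι_loc : ∀ x ∈ S, ∀ᶠ y in 𝓝[S] x, ι y = ι x := by
    intro x hx
    have hoff : ∀ l, ∀ᶠ y in 𝓝[S] x, l ≠ ι x → θ l y ≠ p := fun l =>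
      eventually_imp_distrib_left.2 fun hl =>
        (hcont l x hx).eventually_mem (hp.isOpen_compl.mem_nhds (mt (hι_iff x hx l).1 hl))
    filter_upwards [eventually_all.2 hoff, self_mem_nhdsWithin] with y hy hyS
    by_contra hne
    exact hy (ι y) hne (hι y hyS)
  -- Swapping `ι x` with a fixed slot `c` of the same weight makes the weight of the slot
  -- `c.succAbove j` independent of `x`.
  obtain ⟨c, hc⟩ : ∃ c, ∀ x ∈ S, w (ι x) = w c := by
    rcases S.eq_empty_or_nonempty with rfl | ⟨x₀, hx₀⟩
    · exact ⟨0, fun x hx => hx.elim⟩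
    · exact ⟨ι x₀, fun x hx => (hw x hx _ (hι x hx)).trans (hw x₀ hx₀ _ (hι x₀ hx₀)).symm⟩
  refine ⟨r, fun x j => Equiv.swap (ι x) c (c.succAbove j),
    fun x => (Equiv.injective _).comp Fin.succAbove_right_injective, fun x hx l => ?_,
    fun j x hx => ?_, fun j => ⟨c.succAbove j, fun x hx => Equiv.apply_swap_eq_self (hc x hx) _⟩⟩
  · simp_rw [Ne, hι_iff x hx, Equiv.swap_apply_eq_iff, Fin.exists_succAbove_eq_iff, Ne,
      Equiv.swap_apply_eq_iff, Equiv.swap_apply_right]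
  · refine (hcont _ x hx).congr_of_eventuallyEq ?_ rfl
    filter_upwards [hι_loc x hx] with y hy
    rw [hy]

/-- A system of root functions for `Z_ℝ(P,S)` alone, read in `ℝP¹` through `φ`, with
multiplicities taken as projective roots. -/
def IsAffineRootFunctions {m : ℕ} (d : ℕ) (P : Polynomial (MvPolynomial (Fin m) ℝ))
    (S : Set (Fin m → ℝ)) {k : ℕ} (θ : Fin k → (Fin m → ℝ) → RP1) : Prop :=
  (∀ l, ContinuousOn (θ l) S) ∧
  (∀ x ∈ S, ∀ l l' : Fin k, l ≠ l' → θ l x ≠ θ l' x) ∧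
  (∀ x ∈ S, ∀ l, θ l x ≠ RP1.infty) ∧
  (∀ x ∈ S, ∀ t : ℝ, (evalP P x).eval t = 0 ↔ ∃ l, θ l x = RP1.ofReal t) ∧
  (∀ l : Fin k, ∃ mult : ℕ, 0 < mult ∧ ∀ x ∈ S, ∀ (v : Fin 2 → ℝ) (hv : v ≠ 0),
    θ l x = Projectivization.mk ℝ v hv → HasProjRootOfMult (homog d (evalP P x)) v mult)

section RootFunctions

open RP1

variable {m d r : ℕ} {P : Polynomial (MvPolynomial (Fin m) ℝ)} {S : Set (Fin m → ℝ)}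

theorem IsRealRootFunctions.isAffineRootFunctions_ofReal {η : Fin r → (Fin m → ℝ) → ℝ}
    (hQ : ∀ x ∈ S, evalP P x ≠ 0 ∧ (evalP P x).natDegree ≤ d) (hη : IsRealRootFunctions P S η) :
    IsAffineRootFunctions d P S fun l x => ofReal (η l x) := by
  obtain ⟨hcont, hdisj, hcover, hmult⟩ := hη
  refine ⟨fun l => continuous_ofReal.comp_continuousOn (hcont l),
    fun x hx l l' hll' => ofReal_injective.ne (hdisj x hx l l' hll'),
    fun x _ l => ofReal_ne_infty _,
    fun x hx t => by simp only [hcover x hx t, ofReal_injective.eq_iff], fun l => ?_⟩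
  obtain ⟨μ, hμ, hμS⟩ := hmult l
  exact ⟨μ, hμ, fun x hx v hv h =>
    (hasProjRootOfMult_homog_iff_of_mk_eq_ofReal hv (hQ x hx).1 (hQ x hx).2 h.symm).2
      (hμS x hx).symm⟩

theorem IsAffineRootFunctions.isRealRootFunctions_toReal {θ : Fin r → (Fin m → ℝ) → RP1}
    (hQ : ∀ x ∈ S, evalP P x ≠ 0 ∧ (evalP P x).natDegree ≤ d)
    (hθ : IsAffineRootFunctions d P S θ) :
    IsRealRootFunctions P S fun l x => toReal (θ l x) := by
  obtain ⟨hcont, hdisj, hfin, hcover, hmult⟩ := hθ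
  have hθ_eq : ∀ x ∈ S, ∀ l, ofReal (toReal (θ l x)) = θ l x := fun x hx l =>
    ofReal_toReal (hfin x hx l)
  refine ⟨fun l x hx => (continuousAt_toReal (hfin x hx l)).comp_continuousWithinAt (hcont l x hx),
    fun x hx l l' hll' h => hdisj x hx l l' hll'
      ((hθ_eq x hx l).symm.trans ((congrArg ofReal h).trans (hθ_eq x hx l'))),
    fun x hx t => ?_, fun l => ?_⟩
  · rw [hcover x hx t]
    exact exists_congr fun l => ⟨fun h => (congrArg toReal h).trans (toReal_ofReal t),
      fun h => (hθ_eq x hx l).symm.trans (congrArg ofReal h)⟩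
  · obtain ⟨μ, hμ, hμS⟩ := hmult l
    refine ⟨μ, hμ, fun x hx => ?_⟩
    have hmk := (hθ_eq x hx l).symm.trans (ofReal_eq_mk _)
    exact ((hasProjRootOfMult_homog_iff_of_mk_eq_ofReal _ (hQ x hx).1 (hQ x hx).2
      (ofReal_eq_mk _).symm).1 (hμS x hx _ _ hmk)).symm

theorem delineable_iff_exists_isAffineRootFunctions
    (hQ : ∀ x ∈ S, evalP P x ≠ 0 ∧ (evalP P x).natDegree ≤ d) :
    Delineable P S ↔ ∃ (r : ℕ) (θ : Fin r → (Fin m → ℝ) → RP1), IsAffineRootFunctions d P S θ :=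
  ⟨fun ⟨r, _, hη⟩ => ⟨r, _, hη.isAffineRootFunctions_ofReal hQ⟩,
    fun ⟨r, _, hθ⟩ => ⟨r, _, hθ.isRealRootFunctions_toReal hQ⟩⟩

end RootFunctions

section ProjectiveRootFunctions

open RP1 Projectivization

variable {m d e r : ℕ} {P : Polynomial (MvPolynomial (Fin m) ℝ)} {S : Set (Fin m → ℝ)}
  {θ : Fin r → (Fin m → ℝ) → RP1}

theorem isProjRootFunctions_iff_isAffineRootFunctions
    (hQ : ∀ x ∈ S, evalP P x ≠ 0 ∧ (evalP P x).natDegree = d) :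
    IsProjRootFunctions d P S θ ↔ IsAffineRootFunctions d P S θ := by
  have hinfty : ∀ x ∈ S, MvPolynomial.eval ![1, 0] (homog d (evalP P x)) ≠ 0 := fun x hx h =>
    ((eval_homog_eq_zero_iff_of_mk_eq_infty _ (hQ x hx).1 (hQ x hx).2.le
      infty_eq_mk.symm).1 h).ne (hQ x hx).2
  constructor
  · rintro ⟨hcont, hdisj, hcover, hmult⟩
    refine ⟨hcont, hdisj, fun x hx l hl => hinfty x hx ((hcover x hx _ _).2 ⟨l, hl⟩),
      fun x hx t => ?_, hmult⟩
    rw [← eval_homog_eq_zero_iff_of_mk_eq_ofReal _ (hQ x hx).2.le (ofReal_eq_mk t).symm,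
      hcover x hx]
    rfl
  · rintro ⟨hcont, hdisj, hne, hcover, hmult⟩
    refine ⟨hcont, hdisj, fun x hx v hv => ?_, hmult⟩
    rcases eq_infty_or_exists_eq_ofReal (mk ℝ v hv) with h | ⟨t, h⟩
    · rw [h, eval_homog_eq_zero_iff_of_mk_eq_infty hv (hQ x hx).1 (hQ x hx).2.le h, (hQ x hx).2]
      simpa using hne x hx
    · rw [h, eval_homog_eq_zero_iff_of_mk_eq_ofReal hv (hQ x hx).2.le h, hcover x hx]

theorem IsAffineRootFunctions.isProjRootFunctions_lastCases_infty (he : e < d)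
    (hQ : ∀ x ∈ S, evalP P x ≠ 0 ∧ (evalP P x).natDegree = e)
    (hθ : IsAffineRootFunctions d P S θ) :
    IsProjRootFunctions d P S (Fin.lastCases (fun _ => infty) θ) := by
  obtain ⟨hcont, hdisj, hne, hcover, hmult⟩ := hθ
  refine ⟨fun l => ?_, fun x hx l l' => ?_, fun x hx v hv => ?_, fun l => ?_⟩
  · induction l using Fin.lastCases <;> simp [hcont, continuousOn_const]
  · induction l using Fin.lastCases <;> induction l' using Fin.lastCases <;>
      simp [hne x hx, (hne x hx _).symm]
    exact hdisj x hx _ _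
  · rcases eq_infty_or_exists_eq_ofReal (mk ℝ v hv) with h | ⟨t, h⟩
    · rw [h, eval_homog_eq_zero_iff_of_mk_eq_infty hv (hQ x hx).1 ((hQ x hx).2.trans_lt he).le h,
        (hQ x hx).2]
      exact iff_of_true he ⟨Fin.last r, by simp⟩
    · rw [h, eval_homog_eq_zero_iff_of_mk_eq_ofReal hv ((hQ x hx).2.trans_lt he).le h, hcover x hx,
        Fin.exists_fin_succ']
      simp [(ofReal_ne_infty t).symm]
  · induction l using Fin.lastCases with
    | last =>
      refine ⟨d - e, Nat.sub_pos_of_lt he, fun x hx v hv h => ?_⟩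
      simp only [Fin.lastCases_last] at h
      rw [hasProjRootOfMult_homog_iff_of_mk_eq_infty hv (hQ x hx).1 ((hQ x hx).2.trans_lt he).le
        h.symm, (hQ x hx).2]
    | cast j => simpa using hmult j

theorem IsProjRootFunctions.exists_isAffineRootFunctions (he : e < d)
    (hQ : ∀ x ∈ S, evalP P x ≠ 0 ∧ (evalP P x).natDegree = e)
    (hθ : IsProjRootFunctions d P S θ) :
    ∃ (r' : ℕ) (θ' : Fin r' → (Fin m → ℝ) → RP1), IsAffineRootFunctions d P S θ' := by
  obtain ⟨hcont, hdisj, hcover, hmult⟩ := hθ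
  choose μ hμ hμS using hmult
  have hQd : ∀ x ∈ S, (evalP P x).natDegree ≤ d := fun x hx => ((hQ x hx).2.trans_lt he).le
  have hhit : ∀ x ∈ S, ∃ l, θ l x = infty := fun x hx => (hcover x hx _ _).1
    ((eval_homog_eq_zero_iff_of_mk_eq_infty _ (hQ x hx).1 (hQd x hx) infty_eq_mk.symm).2
      ((hQ x hx).2.trans_lt he))
  have hμ_infty : ∀ x ∈ S, ∀ l, θ l x = infty → μ l = d - e := fun x hx l h => by
    rw [← (hQ x hx).2, ← hasProjRootOfMult_homog_iff_of_mk_eq_infty _ (hQ x hx).1 (hQd x hx)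
      infty_eq_mk.symm]
    exact hμS l x hx _ _ (h.trans infty_eq_mk)
  obtain ⟨r', σ, hσ_inj, hσ_range, hσ_cont, hσ_mult⟩ :=
    exists_reindex_avoiding isClosed_singleton_infty hcont hdisj hhit μ hμ_infty
  refine ⟨r', fun j x => θ (σ x j) x, hσ_cont,
    fun x hx j j' hjj' => hdisj x hx _ _ ((hσ_inj x).ne hjj'),
    fun x hx j => (hσ_range x hx _).2 ⟨j, rfl⟩, fun x hx t => ?_, fun j => ?_⟩
  · rw [← eval_homog_eq_zero_iff_of_mk_eq_ofReal (by simp) (hQd x hx) (ofReal_eq_mk t).symm,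
      hcover x hx _ (by simp)]
    refine ⟨fun ⟨l, hl⟩ => ?_, fun ⟨j, hj⟩ => ⟨σ x j, hj⟩⟩
    obtain ⟨j, rfl⟩ := (hσ_range x hx l).1 (hl.trans_ne (ofReal_ne_infty t))
    exact ⟨j, hl⟩
  · obtain ⟨l, hl⟩ := hσ_mult j
    exact ⟨μ l, hμ l, fun x hx v hv h => hl x hx ▸ hμS _ x hx v hv h⟩

theorem projDelineable_iff_exists_isAffineRootFunctions (he : e ≤ d)
    (hQ : ∀ x ∈ S, evalP P x ≠ 0 ∧ (evalP P x).natDegree = e) :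
    ProjDelineable d P S ↔
      ∃ (r : ℕ) (θ : Fin r → (Fin m → ℝ) → RP1), IsAffineRootFunctions d P S θ := by
  rcases he.lt_or_eq with he | rfl
  · exact ⟨fun ⟨_, _, hθ⟩ => hθ.exists_isAffineRootFunctions he hQ,
      fun ⟨_, _, hθ⟩ => ⟨_, _, hθ.isProjRootFunctions_lastCases_infty he hQ⟩⟩
  · exact exists_congr fun _ => exists_congr fun _ =>
      isProjRootFunctions_iff_isAffineRootFunctions hQ

end ProjectiveRootFunctions

theorem projDelineable_iff_delineable_general (m dn : ℕ)
    (P : Polynomial (MvPolynomial (Fin m) ℝ)) (hdeg : P.natDegree = dn)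
    (S : Set (Fin m → ℝ)) (k : ℕ)
    (hc : ∀ x ∈ S, MvPolynomial.eval x (P.coeff (dn - k)) ≠ 0 ∧
      ∀ j < k, MvPolynomial.eval x (P.coeff (dn - j)) = 0) :
    ProjDelineable dn P S ↔ Delineable P S := by
  have hQ : ∀ x ∈ S, evalP P x ≠ 0 ∧ (evalP P x).natDegree = dn - k := by
    intro x hx
    have hcoeff (i : ℕ) : (evalP P x).coeff i = MvPolynomial.eval x (P.coeff i) :=
      Polynomial.coeff_map _ _
    obtain ⟨hlead, hzero⟩ := hc x hx
    rw [← hcoeff] at hlead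
    exact ⟨fun h => hlead (by rw [h, Polynomial.coeff_zero]),
      Polynomial.natDegree_eq_sub_of_coeff (Polynomial.natDegree_map_le.trans hdeg.le) hlead
        fun j hj => (hcoeff _).trans (hzero j hj)⟩
  rw [projDelineable_iff_exists_isAffineRootFunctions (Nat.sub_le dn k) hQ,
    delineable_iff_exists_isAffineRootFunctions fun x hx =>
      ⟨(hQ x hx).1, (hQ x hx).2.trans_le (Nat.sub_le dn k)⟩]

/-- Let `S ⊆ ℝ^m` and `P = ∑_{k=0}^{d_n} c_k(x) x_n^k` of degree `d_n`
in `x_n`. If there is `k ∈ {0,…,d_n}` such that on all of `S` the coefficient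
`c_{d_n−k}` never vanishes while `c_{d_n−j}` vanishes for all `0 ≤ j ≤ k−1`, then `P` is
projectively delineable on `S` iff `P` is delineable on `S`. -/
theorem projDelineable_iff_delineable (m dn : ℕ)
    (P : Polynomial (MvPolynomial (Fin m) ℝ)) (hdeg : P.natDegree = dn)
    (S : Set (Fin m → ℝ)) (k : ℕ) (hk : k ≤ dn)
    (hc : ∀ x ∈ S, MvPolynomial.eval x (P.coeff (dn - k)) ≠ 0 ∧
      ∀ j < k, MvPolynomial.eval x (P.coeff (dn - j)) = 0) :
    ProjDelineable dn P S ↔ Delineable P S :=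
  projDelineable_iff_delineable_general m dn P hdeg S k hc
end
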